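/- arXiv:2004.00928 — 2 statements merged into one kernel-verified Lean document; each statement's English description precedes it below -/
import Mathlib

section
/- Let M be a compact metric space, f: M → M a homeomorphism, ν an ergodic f-invariant Borel probability measure, X a real Banach space, and A: M → GL(X) continuous with respect to d. Let K be the closure in (GL(X), d) of ⋃_{n∈ℤ} {𝒜_x^n : x ∈ M}. Suppose C: M → GL(X) is ν-continuous and satisfies A(x) = C(f x) ∘ C(x)⁻¹ for ν-a.e. x ∈ M. Then there exists B ∈ GL(X) such that C(y) ∘ B ∈ K for ν-a.e. y ∈ M. -/
open MeasureTheory Filter Topology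

section GLspace

variable {X : Type*} [NormedAddCommGroup X] [NormedSpace ℝ X]

/-- The metric `d(A,B) = ‖A − B‖ + ‖A⁻¹ − B⁻¹‖` on the group `GL(X)` of invertible bounded
linear operators on `X` (formalized as continuous linear equivalences `X ≃L[ℝ] X`). -/
noncomputable instance glMetricSpace : MetricSpace (X ≃L[ℝ] X) where
  dist A B := ‖(A : X →L[ℝ] X) - (B : X →L[ℝ] X)‖ +
    ‖(A.symm : X →L[ℝ] X) - (B.symm : X →L[ℝ] X)‖
  dist_self A := by simp
  dist_comm A B := by
    simp only [norm_sub_rev ((A : X →L[ℝ] X)), norm_sub_rev ((A.symm : X →L[ℝ] X))]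
  dist_triangle A B C := by
    have h1 : ‖(A : X →L[ℝ] X) - (C : X →L[ℝ] X)‖ ≤
        ‖(A : X →L[ℝ] X) - (B : X →L[ℝ] X)‖ + ‖(B : X →L[ℝ] X) - (C : X →L[ℝ] X)‖ :=
      norm_sub_le_norm_sub_add_norm_sub _ _ _
    have h2 : ‖(A.symm : X →L[ℝ] X) - (C.symm : X →L[ℝ] X)‖ ≤
        ‖(A.symm : X →L[ℝ] X) - (B.symm : X →L[ℝ] X)‖ +
        ‖(B.symm : X →L[ℝ] X) - (C.symm : X →L[ℝ] X)‖ :=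
      norm_sub_le_norm_sub_add_norm_sub _ _ _
    try dsimp only
    linarith
  eq_of_dist_eq_zero := by
    intro A B h
    try dsimp only at h
    have h1 : ‖(A : X →L[ℝ] X) - (B : X →L[ℝ] X)‖ = 0 := by
      have := norm_nonneg ((A : X →L[ℝ] X) - (B : X →L[ℝ] X))
      have := norm_nonneg ((A.symm : X →L[ℝ] X) - (B.symm : X →L[ℝ] X))
      linarith
    have h2 : (A : X →L[ℝ] X) = (B : X →L[ℝ] X) := by
      rwa [norm_eq_zero, sub_eq_zero] at h1
    exact ContinuousLinearEquiv.coe_injective h2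

/-- The Borel σ-algebra of `(GL(X), d)`. -/
noncomputable instance : MeasurableSpace (X ≃L[ℝ] X) := borel _
instance : BorelSpace (X ≃L[ℝ] X) := ⟨rfl⟩

end GLspace

variable {M : Type*} {X : Type*} [NormedAddCommGroup X] [NormedSpace ℝ X]

/-- The cocycle generated by `A` over `f`: `𝒜ₓⁿ = A(f^{n-1}x) ∘ ⋯ ∘ A(fx) ∘ A(x)` for `n ≥ 1`
and `𝒜ₓ⁰ = Id`. -/
def coc (f : M → M) (A : M → (X ≃L[ℝ] X)) : ℕ → M → (X ≃L[ℝ] X)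
  | 0, _ => 1
  | n + 1, x => coc f A n (f x) * A x

/-- The two-sided cocycle over a homeomorphism: `𝒜ₓⁿ` for `n ≥ 0` and
`𝒜ₓ^{-n} = (𝒜_{f^{-n}x}^{n})⁻¹` for `n ≥ 1`. -/
noncomputable def cocZ [TopologicalSpace M] (f : M ≃ₜ M) (A : M → (X ≃L[ℝ] X)) :
    ℤ → M → (X ≃L[ℝ] X)
  | (n : ℕ), x => coc f A n x
  | (Int.negSucc n), x => (coc f A (n + 1) (f.symm^[n + 1] x))⁻¹

/-- `C : M → G` is `μ`-continuous: there are compact sets `Kₙ ⊆ M` with `μ(⋃ₙ Kₙ) = 1`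
such that the restriction of `C` to each `Kₙ` is continuous. -/
def MuContinuous [TopologicalSpace M] [MeasurableSpace M] (μ : Measure M) {G : Type*}
    [TopologicalSpace G] (C : M → G) : Prop :=
  ∃ K : ℕ → Set M, (∀ n, IsCompact (K n)) ∧ μ (⋃ n, K n) = 1 ∧ ∀ n, ContinuousOn C (K n)

/-!
Pick a point `x₀` whose forward orbit stays in the full-measure set where `A(x) = C(fx) C(x)⁻¹`
and, by ergodicity, visits every set `U ∩ Kₘ` of positive measure (`U` in a countable basis).
Along that orbit the cocycle telescopes: `𝒜_{x₀}^n = C(fⁿx₀) C(x₀)⁻¹`. Almost every `y` lies in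
some `Kₘ` and in the support of `ν` restricted to `Kₘ`, hence in the closure of the orbit points
inside `Kₘ`; continuity of `C` on `Kₘ` then puts `C(y) C(x₀)⁻¹` in the closure `K`.
-/

lemma lipschitzWith_mul_right (T : X ≃L[ℝ] X) :
    LipschitzWith (‖(T : X →L[ℝ] X)‖₊ + ‖(T.symm : X →L[ℝ] X)‖₊) (· * T) := by
  refine LipschitzWith.of_dist_le_mul fun A B => ?_
  change ‖(A : X →L[ℝ] X).comp (T : X →L[ℝ] X) - (B : X →L[ℝ] X).comp (T : X →L[ℝ] X)‖ +
      ‖(T.symm : X →L[ℝ] X).comp (A.symm : X →L[ℝ] X) -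
        (T.symm : X →L[ℝ] X).comp (B.symm : X →L[ℝ] X)‖ ≤
    (‖(T : X →L[ℝ] X)‖ + ‖(T.symm : X →L[ℝ] X)‖) *
      (‖(A : X →L[ℝ] X) - (B : X →L[ℝ] X)‖ +
        ‖(A.symm : X →L[ℝ] X) - (B.symm : X →L[ℝ] X)‖)
  rw [← ContinuousLinearMap.sub_comp, ← ContinuousLinearMap.comp_sub]
  have h₁ := ContinuousLinearMap.opNorm_comp_le ((A : X →L[ℝ] X) - (B : X →L[ℝ] X))
    (T : X →L[ℝ] X)
  have h₂ := ContinuousLinearMap.opNorm_comp_le (T.symm : X →L[ℝ] X)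
    ((A.symm : X →L[ℝ] X) - (B.symm : X →L[ℝ] X))
  have := norm_nonneg ((A : X →L[ℝ] X) - (B : X →L[ℝ] X))
  have := norm_nonneg ((A.symm : X →L[ℝ] X) - (B.symm : X →L[ℝ] X))
  have := norm_nonneg (T : X →L[ℝ] X)
  have := norm_nonneg (T.symm : X →L[ℝ] X)
  nlinarith

lemma coc_eq_mul_inv_of_forall_lt {f : M → M} {A C : M → (X ≃L[ℝ] X)} {n : ℕ} {x : M}
    (h : ∀ k < n, A (f^[k] x) = C (f (f^[k] x)) * (C (f^[k] x))⁻¹) :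
    coc f A n x = C (f^[n] x) * (C x)⁻¹ := by
  induction n generalizing x with
  | zero => simp [coc]
  | succ n ih =>
    have hx : A x = C (f x) * (C x)⁻¹ := h 0 n.succ_pos
    have hfx : coc f A n (f x) = C (f^[n] (f x)) * (C (f x))⁻¹ :=
      ih fun k hk => by simpa only [Function.iterate_succ_apply] using h (k + 1) (by omega)
    rw [coc, hfx, hx, Function.iterate_succ_apply]
    group

namespace Ergodic

variable {α : Type*} [MeasurableSpace α] {μ : Measure α} {f : α → α}

lemma ae_exists_iterate_mem [IsFiniteMeasure μ] (hf : Ergodic f μ) {s : Set α}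
    (hs : MeasurableSet s) (hμs : μ s ≠ 0) : ∀ᵐ x ∂μ, ∃ n, f^[n] x ∈ s := by
  set W := ⋃ n, f^[n] ⁻¹' s
  have hW : MeasurableSet W := .iUnion fun n => hf.measurable.iterate n hs
  have hfW : f ⁻¹' W ⊆ W := by
    intro x hx
    obtain ⟨n, hn⟩ := Set.mem_iUnion.1 hx
    exact Set.mem_iUnion.2 ⟨n + 1, by rwa [Set.mem_preimage, Function.iterate_succ_apply]⟩
  rcases hf.ae_empty_or_univ_of_preimage_ae_le hW.nullMeasurableSet hfW.eventuallyLE with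
    hnull | hfull
  · have hW0 : μ W = 0 := (measure_congr hnull).trans measure_empty
    exact absurd (measure_mono_null (Set.subset_iUnion (fun n => f^[n] ⁻¹' s) 0) hW0) hμs
  · exact hfull.mono fun x hx => Set.mem_iUnion.1 (hx.mpr trivial)

variable [TopologicalSpace α] [SecondCountableTopology α] [OpensMeasurableSpace α]

lemma ae_support_restrict_subset_closure_orbit [IsFiniteMeasure μ] (hf : Ergodic f μ)
    {s : Set α} (hs : MeasurableSet s) :
    ∀ᵐ x ∂μ, (μ.restrict s).support ⊆ closure (Set.range (f^[·] x) ∩ s) := by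
  set B := TopologicalSpace.countableBasis α
  have hB := TopologicalSpace.isBasis_countableBasis α
  have hvisit : ∀ᵐ x ∂μ, ∀ U ∈ B, μ (U ∩ s) ≠ 0 → ∃ n, f^[n] x ∈ U ∩ s := by
    refine (ae_ball_iff (TopologicalSpace.countable_countableBasis α)).2 fun U hU => ?_
    by_cases hUs : μ (U ∩ s) = 0
    · exact .of_forall fun x h => absurd hUs h
    · exact (hf.ae_exists_iterate_mem ((hB.isOpen hU).measurableSet.inter hs) hUs).mono
        fun x hx _ => hx
  filter_upwards [hvisit] with x hx y hy
  refine hB.mem_closure_iff.2 fun U hU hyU => ?_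
  have hpos : 0 < μ (U ∩ s) := by
    rw [← Measure.restrict_apply (hB.isOpen hU).measurableSet]
    exact (Measure.mem_support_iff_forall y).1 hy U ((hB.isOpen hU).mem_nhds hyU)
  obtain ⟨n, hnU, hns⟩ := hx U hU hpos.ne'
  exact ⟨f^[n] x, hnU, ⟨n, rfl⟩, hns⟩

end Ergodic

lemma Measure.ae_exists_mem_support_restrict {α : Type*} [TopologicalSpace α]
    [HereditarilyLindelofSpace α] [MeasurableSpace α] {μ : Measure α} {s : ℕ → Set α}
    (hs : ∀ m, MeasurableSet (s m)) (hcover : ∀ᵐ y ∂μ, y ∈ ⋃ m, s m) :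
    ∀ᵐ y ∂μ, ∃ m, y ∈ s m ∧ y ∈ (μ.restrict (s m)).support := by
  have hsupp : ∀ᵐ y ∂μ, ∀ m, y ∈ s m → y ∈ (μ.restrict (s m)).support :=
    ae_all_iff.2 fun m => (ae_restrict_iff' (hs m)).1 Measure.support_mem_ae
  filter_upwards [hcover, hsupp] with y hy hys
  obtain ⟨m, hm⟩ := Set.mem_iUnion.1 hy
  exact ⟨m, hm, hys m hm⟩

theorem stmt2_general {M : Type*} [MetricSpace M] [CompactSpace M] [MeasurableSpace M] [BorelSpace M]
    {X : Type*} [NormedAddCommGroup X] [NormedSpace ℝ X]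
    (f : M ≃ₜ M) (ν : Measure M) [IsProbabilityMeasure ν] (herg : Ergodic f ν)
    (A : M → (X ≃L[ℝ] X))
    (K : Set (X ≃L[ℝ] X)) (hK : K = closure (⋃ n : ℤ, Set.range (cocZ f A n)))
    (C : M → (X ≃L[ℝ] X)) (hC : MuContinuous ν C)
    (hcob : ∀ᵐ x ∂ν, A x = C (f x) * (C x)⁻¹) :
    ∃ B : X ≃L[ℝ] X, ∀ᵐ y ∂ν, C y * B ∈ K := by
  obtain ⟨L, hLcompact, hLunion, hLcont⟩ := hC
  have hLmeas m : MeasurableSet (L m) := (hLcompact m).isClosed.measurableSet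
  have hgood : ∀ᵐ y ∂ν, ∃ m, y ∈ L m ∧ y ∈ (ν.restrict (L m)).support :=
    Measure.ae_exists_mem_support_restrict hLmeas
      ((ae_mem_iff_measure_eq (MeasurableSet.iUnion hLmeas).nullMeasurableSet).2
        (by rw [hLunion, measure_univ]))
  have horbit_cob : ∀ᵐ x ∂ν, ∀ n, A (f^[n] x) = C (f (f^[n] x)) * (C (f^[n] x))⁻¹ :=
    ae_all_iff.2 fun n => (herg.toMeasurePreserving.iterate n).quasiMeasurePreserving.ae hcob
  have horbit_dense :=
    ae_all_iff.2 fun m => herg.ae_support_restrict_subset_closure_orbit (hLmeas m)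
  obtain ⟨x₀, hx₀cob, hx₀dense⟩ := (horbit_cob.and horbit_dense).exists
  refine ⟨(C x₀)⁻¹, ?_⟩
  filter_upwards [hgood] with y ⟨m, hym, hysupp⟩
  have hmaps : Set.MapsTo (C · * (C x₀)⁻¹) (Set.range (f^[·] x₀) ∩ L m)
      (⋃ n : ℤ, Set.range (cocZ f A n)) := by
    rintro _ ⟨⟨n, rfl⟩, -⟩
    exact Set.mem_iUnion.2 ⟨n, x₀, coc_eq_mul_inv_of_forall_lt fun k _ => hx₀cob k⟩
  have hcont : ContinuousWithinAt (C · * (C x₀)⁻¹) (Set.range (f^[·] x₀) ∩ L m) y :=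
    (lipschitzWith_mul_right _).continuous.continuousAt.comp_continuousWithinAt
      ((hLcont m y hym).mono Set.inter_subset_right)
  rw [hK]
  exact hcont.mem_closure (hx₀dense m hysupp) hmaps

/-- Let `f` be a homeomorphism of a compact metric space `M` preserving an
ergodic Borel probability measure `ν`, `A : M → GL(X)` continuous, and let `K` be the closure
of `⋃_{n∈ℤ} {𝒜ₓⁿ : x ∈ M}` in `(GL(X), d)`. If `C : M → GL(X)` is `ν`-continuous and
`A(x) = C(fx) ∘ C(x)⁻¹` for `ν`-a.e. `x`, then there exists `B ∈ GL(X)` with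
`C(y) ∘ B ∈ K` for `ν`-a.e. `y`. -/
theorem stmt2 {M : Type*} [MetricSpace M] [CompactSpace M] [MeasurableSpace M] [BorelSpace M]
    {X : Type*} [NormedAddCommGroup X] [NormedSpace ℝ X] [CompleteSpace X]
    (f : M ≃ₜ M) (ν : Measure M) [IsProbabilityMeasure ν] (herg : Ergodic f ν)
    (A : M → (X ≃L[ℝ] X)) (hA : Continuous A)
    (K : Set (X ≃L[ℝ] X)) (hK : K = closure (⋃ n : ℤ, Set.range (cocZ f A n)))
    (C : M → (X ≃L[ℝ] X)) (hC : MuContinuous ν C)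
    (hcob : ∀ᵐ x ∂ν, A x = C (f x) * (C x)⁻¹) :
    ∃ B : X ≃L[ℝ] X, ∀ᵐ y ∂ν, C y * B ∈ K :=
  stmt2_general f ν herg A K hK C hC hcob
end

section
/- Let M be a compact metric space, f: M → M a homeomorphism preserving an ergodic Borel probability measure μ, X a real Banach space, and A: M → GL(X) continuous with respect to d, with cocycle 𝒜. Suppose λ₊(𝒜,μ) = λ₋(𝒜,μ) = 0. Then for every θ > 0 and μ-a.e. x ∈ M there exists N ≥ 1 such that for all k ≥ 1: ∏_{j=0}^{k−1} ‖𝒜_{f^{jN}x}^{N}‖·‖(𝒜_{f^{jN}x}^{N})⁻¹‖ ≤ e^{kNθ} and ∏_{j=0}^{k−1} ‖𝒜_{f^{−jN}x}^{−N}‖·‖(𝒜_{f^{−jN}x}^{−N})⁻¹‖ ≤ e^{kNθ}. -/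
/-!
Let `φ_N(x) = log (‖𝒜ₓᴺ‖ ‖(𝒜ₓᴺ)⁻¹‖) ≥ 0`. Vanishing of both exponents means `∫ φ_N = o(N)`.
The product in the statement is at most `exp` of the Birkhoff sum `∑_{j<k} φ_N (f^{jN} x)`, and
the maximal ergodic inequality for `f^N` bounds the measure of the points where some such sum
exceeds `kNθ` by `∫ φ_N / (Nθ) → 0`. Since `𝒜^{-N}_y = (𝒜ᴺ_{f^{-N} y})⁻¹` has the same condition
number as `𝒜ᴺ_{f^{-N} y}`, the same applies to `f^{-N}` and `φ_N ∘ f^{-N}`. Hence the points that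
are bad for every `N` form a null set.
-/

open MeasureTheory Filter Topology

variable {M : Type*} {X : Type*} [NormedAddCommGroup X] [NormedSpace ℝ X]

section MaximalErgodic

variable {α : Type*} {T : α → α} {g : α → ℝ}

/-- `birkhoffMax T g n x = max 0 (S₁ x) … (Sₙ x)` for the Birkhoff sums `Sₖ = birkhoffSum T g k`. -/
def birkhoffMax (T : α → α) (g : α → ℝ) : ℕ → α → ℝ
  | 0, _ => 0
  | n + 1, x => max 0 (g x + birkhoffMax T g n (T x))

lemma birkhoffMax_nonneg (n : ℕ) (x : α) : 0 ≤ birkhoffMax T g n x := by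
  cases n with
  | zero => exact le_rfl
  | succ n => exact le_max_left _ _

lemma birkhoffMax_le_succ (n : ℕ) (x : α) : birkhoffMax T g n x ≤ birkhoffMax T g (n + 1) x := by
  induction n generalizing x with
  | zero => exact birkhoffMax_nonneg 1 x
  | succ n ih => exact max_le_max le_rfl (add_le_add_right (ih (T x)) _)

lemma monotone_birkhoffMax (x : α) : Monotone fun n => birkhoffMax T g n x :=
  monotone_nat_of_le_succ fun n => birkhoffMax_le_succ n x

lemma birkhoffSum_le_birkhoffMax (n : ℕ) (x : α) : birkhoffSum T g n x ≤ birkhoffMax T g n x := by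
  induction n generalizing x with
  | zero => exact le_rfl
  | succ n ih =>
    rw [birkhoffSum_succ']
    exact (add_le_add_right (ih (T x)) _).trans (le_max_right _ _)

variable [MeasurableSpace α] {μ : Measure α}

lemma measurable_birkhoffMax (hT : Measurable T) (hg : Measurable g) (n : ℕ) :
    Measurable (birkhoffMax T g n) := by
  induction n with
  | zero => exact measurable_const
  | succ n ih => exact measurable_const.max (hg.add (ih.comp hT))

lemma MeasureTheory.MeasurePreserving.integral_comp_of_measurable (hT : MeasurePreserving T μ μ)
    {h : α → ℝ} (hh : Measurable h) : ∫ x, h (T x) ∂μ = ∫ x, h x ∂μ := by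
  conv_rhs => rw [← hT.map_eq]
  exact (integral_map hT.measurable.aemeasurable hh.aestronglyMeasurable).symm

lemma integrable_birkhoffMax (hT : MeasurePreserving T μ μ) (hgm : Measurable g)
    (hgi : Integrable g μ) (n : ℕ) : Integrable (birkhoffMax T g n) μ := by
  induction n with
  | zero => exact integrable_zero _ _ μ
  | succ n ih =>
    have hcomp : Integrable (birkhoffMax T g n ∘ T) μ :=
      (hT.integrable_comp (measurable_birkhoffMax hT.measurable hgm n).aestronglyMeasurable).2 ih
    exact (integrable_zero _ _ μ).sup (hgi.add hcomp)

/-- Garsia's maximal ergodic lemma. -/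
lemma setIntegral_birkhoffMax_pos_nonneg (hT : MeasurePreserving T μ μ) (hgm : Measurable g)
    (hgi : Integrable g μ) (n : ℕ) :
    0 ≤ ∫ x in {x | 0 < birkhoffMax T g (n + 1) x}, g x ∂μ := by
  set E := {x | 0 < birkhoffMax T g (n + 1) x}
  have hE : MeasurableSet E :=
    measurableSet_lt measurable_const (measurable_birkhoffMax hT.measurable hgm _)
  -- `h = M_{n+1} - M_n ∘ T` agrees with `g` on `E`, is `≤ 0` off `E`, and has integral `≥ 0`.
  set h : α → ℝ := fun x => birkhoffMax T g (n + 1) x - birkhoffMax T g n (T x)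
  have hMn := integrable_birkhoffMax hT hgm hgi n
  have hMn' : Integrable (fun x => birkhoffMax T g n (T x)) μ :=
    (hT.integrable_comp (measurable_birkhoffMax hT.measurable hgm n).aestronglyMeasurable).2 hMn
  have hMsucc := integrable_birkhoffMax hT hgm hgi (n + 1)
  have h_eq_on : ∀ x ∈ E, h x = g x := fun x hx => by
    have hpos : 0 < g x + birkhoffMax T g n (T x) :=
      (lt_max_iff.1 hx).resolve_left (lt_irrefl 0)
    simp only [h, birkhoffMax, max_eq_right hpos.le, add_sub_cancel_right]
  have h_nonpos_off : ∀ x ∈ Eᶜ, h x ≤ 0 := fun x hx => by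
    have hx' : birkhoffMax T g (n + 1) x ≤ 0 := not_lt.1 hx
    have := birkhoffMax_nonneg (T := T) (g := g) n (T x)
    simp only [h]
    linarith
  have h_int : 0 ≤ ∫ x, h x ∂μ := by
    rw [integral_sub hMsucc hMn', hT.integral_comp_of_measurable
      (measurable_birkhoffMax hT.measurable hgm n), sub_nonneg]
    exact integral_mono hMn hMsucc (birkhoffMax_le_succ n)
  calc 0 ≤ ∫ x, h x ∂μ := h_int
    _ = (∫ x in E, h x ∂μ) + ∫ x in Eᶜ, h x ∂μ := (integral_add_compl hE (hMsucc.sub hMn')).symm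
    _ ≤ ∫ x in E, h x ∂μ := add_le_of_nonpos_right (setIntegral_nonpos hE.compl h_nonpos_off)
    _ = ∫ x in E, g x ∂μ := setIntegral_congr_fun hE h_eq_on

lemma measure_exists_lt_birkhoffSum_le [IsFiniteMeasure μ] (hT : MeasurePreserving T μ μ)
    {φ : α → ℝ} (hφm : Measurable φ) (hφi : Integrable φ μ) (hφ0 : 0 ≤ φ) {c : ℝ} (hc : 0 < c) :
    μ {x | ∃ k : ℕ, k * c < birkhoffSum T φ k x} ≤ ENNReal.ofReal ((∫ x, φ x ∂μ) / c) := by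
  set g : α → ℝ := fun x => φ x - c
  have hgm : Measurable g := hφm.sub measurable_const
  have hgi : Integrable g μ := hφi.sub (integrable_const c)
  have h_level : ∀ n, μ {x | 0 < birkhoffMax T g n x} ≤ ENNReal.ofReal ((∫ x, φ x ∂μ) / c) := by
    rintro (_ | n)
    · simp [birkhoffMax]
    set E := {x | 0 < birkhoffMax T g (n + 1) x}
    have hgarsia := setIntegral_birkhoffMax_pos_nonneg hT hgm hgi n
    rw [integral_sub hφi.restrict (integrable_const c), setIntegral_const, smul_eq_mul] at hgarsia
    have hφE : ∫ x in E, φ x ∂μ ≤ ∫ x, φ x ∂μ := setIntegral_le_integral hφi (.of_forall hφ0)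
    rw [← ENNReal.ofReal_toReal (measure_ne_top μ E)]
    refine ENNReal.ofReal_le_ofReal ((le_div_iff₀ hc).2 ?_)
    rw [measureReal_def] at hgarsia
    linarith
  have h_sub : {x | ∃ k : ℕ, k * c < birkhoffSum T φ k x} ⊆ ⋃ n, {x | 0 < birkhoffMax T g n x} := by
    rintro x ⟨k, hk⟩
    have hsum : birkhoffSum T g k x = birkhoffSum T φ k x - k * c := by
      simp [g, birkhoffSum, Finset.sum_sub_distrib]
    exact Set.mem_iUnion.2 ⟨k, (sub_pos.2 hk).trans_le (hsum ▸ birkhoffSum_le_birkhoffMax k x)⟩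
  have h_mono : Monotone fun n => {x | 0 < birkhoffMax T g n x} :=
    fun m n hmn x hx => hx.trans_le (monotone_birkhoffMax x hmn)
  calc μ {x | ∃ k : ℕ, k * c < birkhoffSum T φ k x}
      ≤ μ (⋃ n, {x | 0 < birkhoffMax T g n x}) := measure_mono h_sub
    _ = ⨆ n, μ {x | 0 < birkhoffMax T g n x} := h_mono.measure_iUnion
    _ ≤ _ := iSup_le h_level

end MaximalErgodic

namespace ContinuousLinearEquiv

lemma dist_eq_norm_sub_add_norm_sub_symm (A B : X ≃L[ℝ] X) :
    dist A B = ‖(A : X →L[ℝ] X) - (B : X →L[ℝ] X)‖ +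
      ‖(A.symm : X →L[ℝ] X) - (B.symm : X →L[ℝ] X)‖ := rfl

lemma isometry_inv : Isometry fun A : X ≃L[ℝ] X => A⁻¹ :=
  Isometry.of_dist_eq fun _ _ => add_comm _ _

lemma continuous_toContinuousLinearMap : Continuous fun A : X ≃L[ℝ] X => (A : X →L[ℝ] X) :=
  LipschitzWith.continuous (K := 1) <| .of_dist_le_mul fun A B => by
    rw [NNReal.coe_one, one_mul, dist_eq_norm, dist_eq_norm_sub_add_norm_sub_symm]
    exact le_add_of_nonneg_right (norm_nonneg _)

lemma continuous_of_continuous_toContinuousLinearMap {Y : Type*} [TopologicalSpace Y]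
    {g : Y → X ≃L[ℝ] X} (h : Continuous fun y => (g y : X →L[ℝ] X))
    (h_symm : Continuous fun y => ((g y).symm : X →L[ℝ] X)) : Continuous g := by
  refine continuous_iff_continuousAt.2 fun y => tendsto_iff_dist_tendsto_zero.2 ?_
  simp only [dist_eq_norm_sub_add_norm_sub_symm, ← dist_eq_norm]
  simpa using (tendsto_iff_dist_tendsto_zero.1 h.continuousAt).add
    (tendsto_iff_dist_tendsto_zero.1 h_symm.continuousAt)

instance : IsTopologicalGroup (X ≃L[ℝ] X) where
  continuous_mul := by
    have h : Continuous fun A : X ≃L[ℝ] X => (A.symm : X →L[ℝ] X) :=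
      continuous_toContinuousLinearMap.comp isometry_inv.continuous
    exact continuous_of_continuous_toContinuousLinearMap
      ((continuous_toContinuousLinearMap.comp continuous_fst).clm_comp
        (continuous_toContinuousLinearMap.comp continuous_snd))
      ((h.comp continuous_snd).clm_comp (h.comp continuous_fst))
  continuous_inv := isometry_inv.continuous

end ContinuousLinearEquiv

section ConditionNumber

noncomputable def logCond (B : X ≃L[ℝ] X) : ℝ :=
  Real.log ‖(B : X →L[ℝ] X)‖ + Real.log ‖((B⁻¹ : X ≃L[ℝ] X) : X →L[ℝ] X)‖

lemma logCond_inv (B : X ≃L[ℝ] X) : logCond B⁻¹ = logCond B := by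
  rw [logCond, logCond, inv_inv, add_comm]

lemma logCond_nonneg (B : X ≃L[ℝ] X) : 0 ≤ logCond B := by
  rcases subsingleton_or_nontrivial X with hX | hX
  · simp [logCond, Subsingleton.elim (B : X →L[ℝ] X) 0,
      Subsingleton.elim ((B⁻¹ : X ≃L[ℝ] X) : X →L[ℝ] X) 0]
  · have := Real.log_nonneg B.one_le_norm_mul_norm_symm
    rwa [Real.log_mul B.norm_pos.ne' B.norm_symm_pos.ne'] at this

lemma norm_mul_norm_inv_le_exp_logCond (B : X ≃L[ℝ] X) :
    ‖(B : X →L[ℝ] X)‖ * ‖((B⁻¹ : X ≃L[ℝ] X) : X →L[ℝ] X)‖ ≤ Real.exp (logCond B) := by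
  rw [logCond, Real.exp_add]
  exact mul_le_mul (Real.le_exp_log _) (Real.le_exp_log _) (norm_nonneg _) (Real.exp_pos _).le

lemma continuous_log_norm_toContinuousLinearMap :
    Continuous fun B : X ≃L[ℝ] X => Real.log ‖(B : X →L[ℝ] X)‖ := by
  rcases subsingleton_or_nontrivial X with hX | hX
  · simpa [Subsingleton.elim _ (0 : X →L[ℝ] X)] using continuous_const
  · exact ContinuousLinearEquiv.continuous_toContinuousLinearMap.norm.log
      fun B => B.norm_pos.ne'

lemma continuous_logCond : Continuous (logCond : (X ≃L[ℝ] X) → ℝ) :=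
  continuous_log_norm_toContinuousLinearMap.add
    (continuous_log_norm_toContinuousLinearMap.comp continuous_inv)

end ConditionNumber

lemma Continuous.integrable_of_compactSpace [TopologicalSpace M] [CompactSpace M]
    [MeasurableSpace M] [OpensMeasurableSpace M] {μ : Measure M} [IsFiniteMeasure μ] {g : M → ℝ}
    (hg : Continuous g) : Integrable g μ :=
  hg.integrable_of_hasCompactSupport (.of_compactSpace _)

section Cocycle

lemma continuous_coc [TopologicalSpace M] {f : M → M} (hf : Continuous f)
    {A : M → (X ≃L[ℝ] X)} (hA : Continuous A) (n : ℕ) : Continuous (coc f A n) := by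
  induction n with
  | zero => exact continuous_const
  | succ n ih => exact (ih.comp hf).mul hA

lemma cocZ_neg_natCast [TopologicalSpace M] (f : M ≃ₜ M) (A : M → (X ≃L[ℝ] X)) (N : ℕ) (x : M) :
    cocZ f A (-N) x = (coc f A N (f.symm^[N] x))⁻¹ := by
  cases N with
  | zero => exact (inv_one).symm
  | succ N => rfl

lemma prod_norm_mul_norm_inv_le_exp_birkhoffSum (T : M → M) (B : M → (X ≃L[ℝ] X)) (N k : ℕ)
    (x : M) :
    ∏ j ∈ Finset.range k, ‖(B (T^[j * N] x) : X →L[ℝ] X)‖ *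
        ‖(((B (T^[j * N] x))⁻¹ : X ≃L[ℝ] X) : X →L[ℝ] X)‖ ≤
      Real.exp (birkhoffSum (T^[N]) (logCond ∘ B) k x) := by
  rw [birkhoffSum, Real.exp_sum]
  refine Finset.prod_le_prod (fun _ _ => by positivity) fun j _ => ?_
  rw [← Function.iterate_mul, Nat.mul_comm N j]
  exact norm_mul_norm_inv_le_exp_logCond _

lemma tendsto_integral_logCond_coc [TopologicalSpace M] [CompactSpace M] [MeasurableSpace M]
    [OpensMeasurableSpace M] {μ : Measure M} [IsFiniteMeasure μ] {f : M → M} (hf : Continuous f)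
    {A : M → (X ≃L[ℝ] X)} (hA : Continuous A)
    (hlamP : Tendsto (fun n : ℕ =>
      (n : ℝ)⁻¹ * ∫ x, Real.log ‖(coc f A n x : X →L[ℝ] X)‖ ∂μ) atTop (𝓝 0))
    (hlamM : Tendsto (fun n : ℕ =>
      (n : ℝ)⁻¹ * ∫ x, Real.log ‖(((coc f A n x)⁻¹ : X ≃L[ℝ] X) : X →L[ℝ] X)‖ ∂μ)
      atTop (𝓝 0)) :
    Tendsto (fun n : ℕ => (n : ℝ)⁻¹ * ∫ x, logCond (coc f A n x) ∂μ) atTop (𝓝 0) := by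
  have hcoc := continuous_coc hf hA
  have hlog := continuous_log_norm_toContinuousLinearMap (X := X)
  have hsplit : ∀ n : ℕ, ∫ x, logCond (coc f A n x) ∂μ =
      (∫ x, Real.log ‖(coc f A n x : X →L[ℝ] X)‖ ∂μ) +
        ∫ x, Real.log ‖(((coc f A n x)⁻¹ : X ≃L[ℝ] X) : X →L[ℝ] X)‖ ∂μ := fun n =>
    integral_add (hlog.comp (hcoc n)).integrable_of_compactSpace
      (hlog.comp (hcoc n).inv).integrable_of_compactSpace
  simpa only [hsplit, mul_add, add_zero] using hlamP.add hlamM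

end Cocycle

section BirkhoffSumBounds

variable {α : Type*} [MeasurableSpace α] {μ : Measure α}

lemma ae_exists_notMem_of_tendsto_measure_zero {E : ℕ → Set α}
    (h : Tendsto (fun N => μ (E N)) atTop (𝓝 0)) : ∀ᵐ x ∂μ, ∃ N, 1 ≤ N ∧ x ∉ E N := by
  rw [ae_iff]
  refine le_antisymm (ge_of_tendsto' (h.comp (tendsto_add_atTop_nat 1)) fun N => ?_) zero_le
  exact measure_mono fun x hx => not_not.1 fun hxN => hx ⟨N + 1, Nat.le_add_left 1 N, hxN⟩

lemma tendsto_measure_exists_lt_birkhoffSum [IsFiniteMeasure μ] {T : ℕ → α → α}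
    (hT : ∀ N, MeasurePreserving (T N) μ μ) {φ : ℕ → α → ℝ} (hφm : ∀ N, Measurable (φ N))
    (hφi : ∀ N, Integrable (φ N) μ) (hφ0 : ∀ N, 0 ≤ φ N)
    (hlim : Tendsto (fun N : ℕ => (N : ℝ)⁻¹ * ∫ x, φ N x ∂μ) atTop (𝓝 0)) {θ : ℝ} (hθ : 0 < θ) :
    Tendsto (fun N : ℕ => μ {x | ∃ k : ℕ, k * (N * θ) < birkhoffSum (T N) (φ N) k x})
      atTop (𝓝 0) := by
  have hbound : Tendsto (fun N : ℕ => ENNReal.ofReal ((N : ℝ)⁻¹ * (∫ x, φ N x ∂μ) / θ))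
      atTop (𝓝 0) := by
    simpa using ENNReal.tendsto_ofReal (hlim.div_const θ)
  refine tendsto_of_tendsto_of_tendsto_of_le_of_le' tendsto_const_nhds hbound
    (.of_forall fun _ => zero_le) ((eventually_ge_atTop 1).mono fun N hN => ?_)
  have hNθ : 0 < (N : ℝ) * θ := mul_pos (by exact_mod_cast hN) hθ
  refine (measure_exists_lt_birkhoffSum_le (hT N) (hφm N) (hφi N) (hφ0 N) hNθ).trans_eq ?_
  rw [div_mul_eq_div_div, inv_mul_eq_div]

lemma ae_exists_forall_birkhoffSum_le [IsFiniteMeasure μ] {T T' : ℕ → α → α}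
    (hT : ∀ N, MeasurePreserving (T N) μ μ) (hT' : ∀ N, MeasurePreserving (T' N) μ μ)
    {φ φ' : ℕ → α → ℝ} (hφm : ∀ N, Measurable (φ N)) (hφm' : ∀ N, Measurable (φ' N))
    (hφi : ∀ N, Integrable (φ N) μ) (hφi' : ∀ N, Integrable (φ' N) μ)
    (hφ0 : ∀ N, 0 ≤ φ N) (hφ0' : ∀ N, 0 ≤ φ' N)
    (hlim : Tendsto (fun N : ℕ => (N : ℝ)⁻¹ * ∫ x, φ N x ∂μ) atTop (𝓝 0))
    (hlim' : Tendsto (fun N : ℕ => (N : ℝ)⁻¹ * ∫ x, φ' N x ∂μ) atTop (𝓝 0)) {θ : ℝ} (hθ : 0 < θ) :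
    ∀ᵐ x ∂μ, ∃ N, 1 ≤ N ∧ ∀ k : ℕ,
      birkhoffSum (T N) (φ N) k x ≤ k * (N * θ) ∧ birkhoffSum (T' N) (φ' N) k x ≤ k * (N * θ) := by
  have hsum := (tendsto_measure_exists_lt_birkhoffSum hT hφm hφi hφ0 hlim hθ).add
    (tendsto_measure_exists_lt_birkhoffSum hT' hφm' hφi' hφ0' hlim' hθ)
  rw [add_zero] at hsum
  have hbad := tendsto_of_tendsto_of_tendsto_of_le_of_le tendsto_const_nhds hsum
    (fun _ => zero_le) fun _ => measure_union_le _ _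
  filter_upwards [ae_exists_notMem_of_tendsto_measure_zero hbad] with x ⟨N, hN, hx⟩
  simp only [Set.mem_union, Set.mem_ofPred_eq, not_or, not_exists, not_lt] at hx
  exact ⟨N, hN, fun k => ⟨hx.1 k, hx.2 k⟩⟩

end BirkhoffSumBounds

theorem stmt14_general {M : Type*} [MetricSpace M] [CompactSpace M] [MeasurableSpace M] [BorelSpace M]
    {X : Type*} [NormedAddCommGroup X] [NormedSpace ℝ X]
    (f : M ≃ₜ M) (μ : Measure M) [IsProbabilityMeasure μ] (herg : Ergodic f μ)
    (A : M → (X ≃L[ℝ] X)) (hA : Continuous A)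
    (hlamP : Tendsto (fun n : ℕ =>
      (n : ℝ)⁻¹ * ∫ x, Real.log ‖(coc f A n x : X →L[ℝ] X)‖ ∂μ) atTop (𝓝 0))
    (hlamM : Tendsto (fun n : ℕ =>
      (n : ℝ)⁻¹ * ∫ x, Real.log ‖(((coc f A n x)⁻¹ : X ≃L[ℝ] X) : X →L[ℝ] X)‖ ∂μ)
      atTop (𝓝 0)) :
    ∀ θ : ℝ, 0 < θ → ∀ᵐ x ∂μ, ∃ N : ℕ, 1 ≤ N ∧ ∀ k : ℕ, 1 ≤ k →
      (∏ j ∈ Finset.range k,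
          (‖(coc f A N (f^[j * N] x) : X →L[ℝ] X)‖ *
            ‖(((coc f A N (f^[j * N] x))⁻¹ : X ≃L[ℝ] X) : X →L[ℝ] X)‖) ≤
        Real.exp ((k : ℝ) * (N : ℝ) * θ)) ∧
      (∏ j ∈ Finset.range k,
          (‖(cocZ f A (-(N : ℤ)) (f.symm^[j * N] x) : X →L[ℝ] X)‖ *
            ‖(((cocZ f A (-(N : ℤ)) (f.symm^[j * N] x))⁻¹ : X ≃L[ℝ] X) : X →L[ℝ] X)‖) ≤
        Real.exp ((k : ℝ) * (N : ℝ) * θ)) := by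
  intro θ hθ
  have hf : MeasurePreserving f μ μ := herg.toMeasurePreserving
  have hf_symm : MeasurePreserving f.symm μ μ := MeasurePreserving.symm f.toMeasurableEquiv hf
  set φ : ℕ → M → ℝ := fun N x => logCond (coc f A N x)
  have hφ : ∀ N, Continuous (φ N) := fun N =>
    continuous_logCond.comp (continuous_coc f.continuous hA N)
  have hφ_back : ∀ N, Continuous (φ N ∘ f.symm^[N]) := fun N =>
    (hφ N).comp (f.symm.continuous.iterate N)
  have hlim := tendsto_integral_logCond_coc f.continuous hA hlamP hlamM
  have hlim_back : Tendsto (fun N : ℕ => (N : ℝ)⁻¹ * ∫ x, (φ N ∘ f.symm^[N]) x ∂μ)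
      atTop (𝓝 0) := by
    simpa only [Function.comp_apply, fun N => (hf_symm.iterate N).integral_comp_of_measurable
      (hφ N).measurable] using hlim
  filter_upwards [ae_exists_forall_birkhoffSum_le (fun N => hf.iterate N)
    (fun N => hf_symm.iterate N) (fun N => (hφ N).measurable) (fun N => (hφ_back N).measurable)
    (fun N => (hφ N).integrable_of_compactSpace) (fun N => (hφ_back N).integrable_of_compactSpace)
    (fun _ _ => logCond_nonneg _) (fun _ _ => logCond_nonneg _) hlim hlim_back hθ]
    with x ⟨N, hN, hx⟩
  have hcocZ : logCond ∘ cocZ f A (-N) = φ N ∘ f.symm^[N] := funext fun y => by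
    simp only [Function.comp_apply, cocZ_neg_natCast, logCond_inv, φ]
  refine ⟨N, hN, fun k _ => ⟨?_, ?_⟩⟩
  · refine (prod_norm_mul_norm_inv_le_exp_birkhoffSum f (coc f A N) N k x).trans ?_
    exact Real.exp_le_exp.2 ((hx k).1.trans_eq (mul_assoc _ _ _).symm)
  · refine (prod_norm_mul_norm_inv_le_exp_birkhoffSum f.symm (cocZ f A (-N)) N k x).trans ?_
    rw [hcocZ]
    exact Real.exp_le_exp.2 ((hx k).2.trans_eq (mul_assoc _ _ _).symm)

/-- If both Lyapunov exponents of the cocycle vanish, then for every `θ > 0`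
and `μ`-a.e. `x` there is `N ≥ 1` with
`∏_{j<k} ‖𝒜_{f^{jN}x}^N‖·‖(𝒜_{f^{jN}x}^N)⁻¹‖ ≤ e^{kNθ}` and
`∏_{j<k} ‖𝒜_{f^{−jN}x}^{−N}‖·‖(𝒜_{f^{−jN}x}^{−N})⁻¹‖ ≤ e^{kNθ}` for all `k ≥ 1`. -/
theorem stmt14 {M : Type*} [MetricSpace M] [CompactSpace M] [MeasurableSpace M] [BorelSpace M]
    {X : Type*} [NormedAddCommGroup X] [NormedSpace ℝ X] [CompleteSpace X]
    (f : M ≃ₜ M) (μ : Measure M) [IsProbabilityMeasure μ] (herg : Ergodic f μ)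
    (A : M → (X ≃L[ℝ] X)) (hA : Continuous A)
    (hlamP : Tendsto (fun n : ℕ =>
      (n : ℝ)⁻¹ * ∫ x, Real.log ‖(coc f A n x : X →L[ℝ] X)‖ ∂μ) atTop (𝓝 0))
    (hlamM : Tendsto (fun n : ℕ =>
      (n : ℝ)⁻¹ * ∫ x, Real.log ‖(((coc f A n x)⁻¹ : X ≃L[ℝ] X) : X →L[ℝ] X)‖ ∂μ)
      atTop (𝓝 0)) :
    ∀ θ : ℝ, 0 < θ → ∀ᵐ x ∂μ, ∃ N : ℕ, 1 ≤ N ∧ ∀ k : ℕ, 1 ≤ k →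
      (∏ j ∈ Finset.range k,
          (‖(coc f A N (f^[j * N] x) : X →L[ℝ] X)‖ *
            ‖(((coc f A N (f^[j * N] x))⁻¹ : X ≃L[ℝ] X) : X →L[ℝ] X)‖) ≤
        Real.exp ((k : ℝ) * (N : ℝ) * θ)) ∧
      (∏ j ∈ Finset.range k,
          (‖(cocZ f A (-(N : ℤ)) (f.symm^[j * N] x) : X →L[ℝ] X)‖ *
            ‖(((cocZ f A (-(N : ℤ)) (f.symm^[j * N] x))⁻¹ : X ≃L[ℝ] X) : X →L[ℝ] X)‖) ≤
        Real.exp ((k : ℝ) * (N : ℝ) * θ)) :=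
  stmt14_general f μ herg A hA hlamP hlamM
end
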